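/- arXiv:2207.10665 — 4 statements merged into one kernel-verified Lean document; each statement's English description precedes it below -/
import Mathlib

section
/- Fix positive integers $R_1, R_2, R_3, R_4$ and let $M \in \mathbb{R}^{(R_4 R_1 \cdot R_2 R_3) \times (R_1 R_2 \cdot R_3 R_4)}$ be defined on paired indices by $M(((p_1,q_1),(p_3,q_3)), ((p_2,q_2),(p_4,q_4))) = \delta_{q_1,p_2}\,\delta_{q_2,p_3}\,\delta_{q_3,p_4}\,\delta_{q_4,p_1}$, where $1 \le p_s, \text{resp. } q_s$, range over appropriate sets of sizes $R_{s-1}$ and $R_s$ (indices mod 4). Then $\mathrm{rank}(M) = R_1 R_2 R_3 R_4$. -/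
theorem Matrix.rank_eq_card_of_apply_eq_ite_equiv {m n R : Type*} [Fintype m] [Fintype n]
    [DecidableEq n] [CommSemiring R] [StrongRankCondition R] (e : m ≃ n) (M : Matrix m n R)
    (hM : ∀ i j, M i j = if e i = j then 1 else 0) :
    M.rank = Fintype.card n := by
  have hM_eq : M = (1 : Matrix n n R).submatrix e (Equiv.refl n) := by
    ext i j
    rw [hM, submatrix_apply, one_apply, Equiv.refl_apply]
  rw [hM_eq, rank_submatrix, rank_one]

def Equiv.prodRotate4 (α β γ δ : Type*) : δ × α × β × γ ≃ α × β × γ × δ where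
  toFun x := (x.2.1, x.2.2.1, x.2.2.2, x.1)
  invFun y := (y.2.2.2, y.1, y.2.1, y.2.2.1)
  left_inv _ := rfl
  right_inv _ := rfl

theorem rank_kronecker_delta_quadruple_general (R1 R2 R3 R4 : ℕ)
    (M : Matrix (Fin R4 × Fin R1 × Fin R2 × Fin R3)
                (Fin R1 × Fin R2 × Fin R3 × Fin R4) ℝ)
    (hM : ∀ (p1 : Fin R4) (q1 : Fin R1) (p3 : Fin R2) (q3 : Fin R3)
          (p2 : Fin R1) (q2 : Fin R2) (p4 : Fin R3) (q4 : Fin R4),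
      M (p1, q1, p3, q3) (p2, q2, p4, q4) =
        (if q1 = p2 then (1 : ℝ) else 0) * (if q2 = p3 then (1 : ℝ) else 0) *
        (if q3 = p4 then (1 : ℝ) else 0) * (if q4 = p1 then (1 : ℝ) else 0)) :
    M.rank = R1 * R2 * R3 * R4 := by
  -- The four deltas say exactly that the column is the cyclic shift of the row index,
  -- so `M` is a row permutation of the identity matrix.
  have hM_perm : ∀ i j, M i j = if Equiv.prodRotate4 _ _ _ _ i = j then 1 else 0 := by
    rintro ⟨p1, q1, p3, q3⟩ ⟨p2, q2, p4, q4⟩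
    simp only [hM, ite_zero_mul_ite_zero, mul_one, Equiv.prodRotate4, Equiv.coe_fn_mk,
      Prod.mk.injEq, @eq_comm _ q2, @eq_comm _ q4, and_assoc]
  rw [Matrix.rank_eq_card_of_apply_eq_ite_equiv _ M hM_perm]
  simp only [Fintype.card_prod, Fintype.card_fin, mul_assoc]

/-- The matrix `M(((p₁,q₁),(p₃,q₃)),((p₂,q₂),(p₄,q₄))) = δ_{q₁,p₂} δ_{q₂,p₃} δ_{q₃,p₄} δ_{q₄,p₁}`
has rank `R₁ R₂ R₃ R₄`. -/
theorem rank_kronecker_delta_quadruple (R1 R2 R3 R4 : ℕ)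
    (hR1 : 0 < R1) (hR2 : 0 < R2) (hR3 : 0 < R3) (hR4 : 0 < R4)
    (M : Matrix (Fin R4 × Fin R1 × Fin R2 × Fin R3)
                (Fin R1 × Fin R2 × Fin R3 × Fin R4) ℝ)
    (hM : ∀ (p1 : Fin R4) (q1 : Fin R1) (p3 : Fin R2) (q3 : Fin R3)
          (p2 : Fin R1) (q2 : Fin R2) (p4 : Fin R3) (q4 : Fin R4),
      M (p1, q1, p3, q3) (p2, q2, p4, q4) =
        (if q1 = p2 then (1 : ℝ) else 0) * (if q2 = p3 then (1 : ℝ) else 0) *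
        (if q3 = p4 then (1 : ℝ) else 0) * (if q4 = p1 then (1 : ℝ) else 0)) :
    M.rank = R1 * R2 * R3 * R4 :=
  rank_kronecker_delta_quadruple_general R1 R2 R3 R4 M hM
end

section
/- Let $d \ge 4$, let $\tau \in S_d$, and define $\alpha(j) = j + 1 \pmod d$ and $\beta(j) = d+1-j$ as permutations of $\{1,\ldots,d\}$. For $\tau' = \tau \circ \alpha^k \circ \beta^\ell$ with $0 \le k < d$ and $\ell \in \{0,1\}$, and for any $1 \le j_1 < j_2 < j_3 < j_4 \le d$, the quadruple $(\tau'(j_1), \tau'(j_2), \tau'(j_3), \tau'(j_4))$ is of the correct cyclic order with respect to $\tau$, meaning there exists $s \in \{1,2,3,4\}$ such that, reading subscripts modulo $4$, the values $\tau^{-1}(\tau'(j_s)), \tau^{-1}(\tau'(j_{s+1})), \tau^{-1}(\tau'(j_{s+2})), \tau^{-1}(\tau'(j_{s+3}))$ are strictly increasing or strictly decreasing. -/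
/-- A quadruple `v` of indices is of the correct cyclic order with respect to `τ`:
some cyclic rotation of the quadruple has strictly monotone values under `τ⁻¹`. -/
def correctOrder4 {d : ℕ} (τ : Equiv.Perm (Fin d)) (v : Fin 4 → Fin d) : Prop :=
  ∃ s : Fin 4, StrictMono (fun a : Fin 4 => τ.symm (v (s + a))) ∨
    StrictAnti (fun a : Fin 4 => τ.symm (v (s + a)))

/-!
Write `τ' = τ * σ` with `σ = αᵏ βˡ` in the dihedral group. Being of the correct order with
respect to `τ` only depends on `τ⁻¹ τ' = σ`, so it suffices that the set of cyclically ordered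
quadruples of `Fin d` contains the increasing ones and is stable under `β` and `α`.
Stability under the order-reversing `β` is clear. The rotation `α` is strictly monotone away
from the maximum `d - 1`, which it sends to the minimum `0`; so the image of a cyclically
ordered quadruple is again cyclically ordered, read starting (increasing case) or ending
(decreasing case) at the entry sent to `0`.
-/

open Fin

def CyclicallyOrdered {α : Type*} [Preorder α] (w : Fin 4 → α) : Prop :=
  ∃ s : Fin 4, StrictMono (fun a => w (s + a)) ∨ StrictAnti (fun a => w (s + a))

theorem strictMono_fin_four_iff {α : Type*} [Preorder α] {w : Fin 4 → α} :
    StrictMono w ↔ w 0 < w 1 ∧ w 1 < w 2 ∧ w 2 < w 3 := by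
  rw [Fin.strictMono_iff_lt_succ]
  exact ⟨fun h => ⟨h 0, h 1, h 2⟩, fun ⟨h₀, h₁, h₂⟩ i => by fin_cases i <;> assumption⟩

theorem strictAnti_fin_four_iff {α : Type*} [Preorder α] {w : Fin 4 → α} :
    StrictAnti w ↔ w 1 < w 0 ∧ w 2 < w 1 ∧ w 3 < w 2 := by
  rw [Fin.strictAnti_iff_succ_lt]
  exact ⟨fun h => ⟨h 0, h 1, h 2⟩, fun ⟨h₀, h₁, h₂⟩ i => by fin_cases i <;> assumption⟩

namespace CyclicallyOrdered

variable {α β : Type*} [Preorder α] [Preorder β] {w : Fin 4 → α}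

theorem of_strictMono (hw : StrictMono w) : CyclicallyOrdered w :=
  ⟨0, .inl (by simpa only [zero_add] using hw)⟩

theorem of_strictAnti (hw : StrictAnti w) : CyclicallyOrdered w :=
  ⟨0, .inr (by simpa only [zero_add] using hw)⟩

theorem of_add (c : Fin 4) (hw : CyclicallyOrdered fun a => w (c + a)) :
    CyclicallyOrdered w := by
  obtain ⟨s, hs⟩ := hw
  exact ⟨c + s, by simpa only [add_assoc] using hs⟩

theorem comp_strictMono {f : α → β} (hf : StrictMono f) (hw : CyclicallyOrdered w) :
    CyclicallyOrdered (f ∘ w) := by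
  obtain ⟨s, hs | hs⟩ := hw
  exacts [⟨s, .inl (hf.comp hs)⟩, ⟨s, .inr (hf.comp_strictAnti hs)⟩]

theorem comp_strictAnti {f : α → β} (hf : StrictAnti f) (hw : CyclicallyOrdered w) :
    CyclicallyOrdered (f ∘ w) := by
  obtain ⟨s, hs | hs⟩ := hw
  exacts [⟨s, .inr (hf.comp_strictMono hs)⟩, ⟨s, .inl (hf.comp hs)⟩]

end CyclicallyOrdered

section finRotate

variable {n : ℕ}

theorem finRotate_lt_finRotate {a b : Fin (n + 1)} (hab : a < b) (hb : b ≠ last n) :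
    finRotate (n + 1) a < finRotate (n + 1) b := by
  rw [Fin.lt_def, coe_finRotate_of_ne_last (ne_last_of_lt hab), coe_finRotate_of_ne_last hb]
  exact Nat.succ_lt_succ hab

theorem finRotate_last_lt {a : Fin (n + 1)} (ha : a ≠ last n) :
    finRotate (n + 1) (last n) < finRotate (n + 1) a := by
  rw [Fin.lt_def, finRotate_last, coe_finRotate_of_ne_last ha]
  exact Nat.succ_pos _

theorem CyclicallyOrdered.finRotate_comp_of_strictMono {w : Fin 4 → Fin (n + 1)}
    (hw : StrictMono w) : CyclicallyOrdered (finRotate (n + 1) ∘ w) := by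
  obtain ⟨h₀, h₁, h₂⟩ := strictMono_fin_four_iff.1 hw
  by_cases h₃ : w 3 = last n
  · refine of_add 3 (of_strictMono (strictMono_fin_four_iff.2 ⟨?_, ?_, ?_⟩)) <;>
      simp only [Function.comp_apply, Fin.reduceAdd, h₃]
    exacts [finRotate_last_lt (ne_last_of_lt (h₀.trans (h₁.trans h₂))),
      finRotate_lt_finRotate h₀ (ne_last_of_lt (h₁.trans h₂)),
      finRotate_lt_finRotate h₁ (ne_last_of_lt h₂)]
  · exact of_strictMono (strictMono_fin_four_iff.2 ⟨finRotate_lt_finRotate h₀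
      (ne_last_of_lt (h₁.trans h₂)), finRotate_lt_finRotate h₁ (ne_last_of_lt h₂),
      finRotate_lt_finRotate h₂ h₃⟩)

theorem CyclicallyOrdered.finRotate_comp_of_strictAnti {w : Fin 4 → Fin (n + 1)}
    (hw : StrictAnti w) : CyclicallyOrdered (finRotate (n + 1) ∘ w) := by
  obtain ⟨h₀, h₁, h₂⟩ := strictAnti_fin_four_iff.1 hw
  by_cases h₃ : w 0 = last n
  · refine of_add 1 (of_strictAnti (strictAnti_fin_four_iff.2 ⟨?_, ?_, ?_⟩)) <;>
      simp only [Function.comp_apply, Fin.reduceAdd, h₃]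
    exacts [finRotate_lt_finRotate h₁ (ne_last_of_lt h₀),
      finRotate_lt_finRotate h₂ (ne_last_of_lt (h₁.trans h₀)),
      finRotate_last_lt (ne_last_of_lt (h₂.trans (h₁.trans h₀)))]
  · exact of_strictAnti (strictAnti_fin_four_iff.2 ⟨finRotate_lt_finRotate h₀ h₃,
      finRotate_lt_finRotate h₁ (ne_last_of_lt h₀),
      finRotate_lt_finRotate h₂ (ne_last_of_lt (h₁.trans h₀))⟩)

end finRotate

namespace CyclicallyOrdered

variable {d : ℕ} {w : Fin 4 → Fin d}

theorem finRotate_comp (hw : CyclicallyOrdered w) : CyclicallyOrdered (finRotate d ∘ w) := by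
  obtain _ | n := d
  · exact (w 0).elim0
  obtain ⟨s, hs | hs⟩ := hw
  exacts [of_add s (finRotate_comp_of_strictMono hs), of_add s (finRotate_comp_of_strictAnti hs)]

theorem finRotate_pow_comp (hw : CyclicallyOrdered w) (k : ℕ) :
    CyclicallyOrdered (⇑(finRotate d ^ k) ∘ w) := by
  induction k with
  | zero => simpa using hw
  | succ k ih =>
    rw [pow_succ', Equiv.Perm.coe_mul, Function.comp_assoc]
    exact ih.finRotate_comp

theorem revPerm_pow_comp (hw : CyclicallyOrdered w) (ℓ : ℕ) :
    CyclicallyOrdered (⇑((revPerm : Equiv.Perm (Fin d)) ^ ℓ) ∘ w) := by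
  induction ℓ with
  | zero => simpa using hw
  | succ ℓ ih =>
    rw [pow_succ', Equiv.Perm.coe_mul, Function.comp_assoc]
    exact ih.comp_strictAnti (f := ⇑revPerm) rev_strictAnti

end CyclicallyOrdered

theorem rotation_reflection_preserves_cyclic_order_general (d : ℕ)
    (τ : Equiv.Perm (Fin d)) (k ℓ : ℕ)
    (τ' : Equiv.Perm (Fin d))
    (hτ' : τ' = τ * (finRotate d) ^ k * (Fin.revPerm : Equiv.Perm (Fin d)) ^ ℓ)
    (j1 j2 j3 j4 : Fin d) (h12 : j1 < j2) (h23 : j2 < j3) (h34 : j3 < j4) :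
    correctOrder4 τ ![τ' j1, τ' j2, τ' j3, τ' j4] := by
  have hj : CyclicallyOrdered ![j1, j2, j3, j4] :=
    .of_strictMono (strictMono_fin_four_iff.2 ⟨h12, h23, h34⟩)
  have hσ := (hj.revPerm_pow_comp ℓ).finRotate_pow_comp k
  show CyclicallyOrdered (τ.symm ∘ _)
  convert hσ using 1
  funext a
  fin_cases a <;> simp [hτ', mul_assoc]

/-- Rotations and reflections of the loop preserve the cyclic order of every quadruple:
if `τ' = τ ∘ αᵏ ∘ βˡ` then every increasing quadruple is mapped by `τ'` to a quadruple
of the correct cyclic order with respect to `τ`. -/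
theorem rotation_reflection_preserves_cyclic_order (d : ℕ) (hd : 4 ≤ d)
    (τ : Equiv.Perm (Fin d)) (k ℓ : ℕ) (hk : k < d) (hℓ : ℓ < 2)
    (τ' : Equiv.Perm (Fin d))
    (hτ' : τ' = τ * (finRotate d) ^ k * (Fin.revPerm : Equiv.Perm (Fin d)) ^ ℓ)
    (j1 j2 j3 j4 : Fin d) (h12 : j1 < j2) (h23 : j2 < j3) (h34 : j3 < j4) :
    correctOrder4 τ ![τ' j1, τ' j2, τ' j3, τ' j4] :=
  rotation_reflection_preserves_cyclic_order_general d τ k ℓ τ' hτ' j1 j2 j3 j4 h12 h23 h34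
end

section
/- Let $d \ge 3$ and $\tau, \tau' \in S_d$, and define $\beta \in S_d$ by $\beta(j) = d + 1 - j$. Then $\tau' \in \{\tau, \tau \circ \beta\}$ if and only if for every $1 \le j_1 < j_2 < j_3 \le d$, the triple $(\tau'(j_1), \tau'(j_2), \tau'(j_3))$ is of the correct order with respect to $\tau$, meaning $\tau^{-1}(\tau'(j_1)) < \tau^{-1}(\tau'(j_2)) < \tau^{-1}(\tau'(j_3))$ or $\tau^{-1}(\tau'(j_1)) > \tau^{-1}(\tau'(j_2)) > \tau^{-1}(\tau'(j_3))$. -/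
lemma perm_eq_one_of_strictMono {d : ℕ} (σ : Equiv.Perm (Fin d))
    (h : StrictMono σ) : σ = 1 := by
  have h' : StrictMono σ.symm := by
    intro a b hab
    rcases lt_trichotomy (σ.symm a) (σ.symm b) with hc | hc | hc
    · exact hc
    · simp [Equiv.symm_apply_eq] at hc
      omega
    · have := h hc
      simp at this
      omega
  have inst : WellFoundedLT (Fin d) := inferInstance
  have h1 : ∀ i, i ≤ σ i := fun i => h.le_apply
  have h2 : ∀ i, i ≤ σ.symm i := fun i => h'.le_apply
  ext i
  have ha := h2 (σ i)
  simp only [Equiv.symm_apply_apply] at ha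
  have hb := h1 i
  have : σ i = i := le_antisymm ha hb
  simp [this]

/-- `τ' ∈ {τ, τ ∘ β}` (with `β` the reflection) iff every increasing triple of positions
is mapped by `τ'` to a triple of the correct order with respect to `τ`. -/
theorem tt_equiv_class_iff_triples (d : ℕ) (hd : 3 ≤ d) (τ τ' : Equiv.Perm (Fin d)) :
    (τ' = τ ∨ τ' = τ * (Fin.revPerm : Equiv.Perm (Fin d))) ↔
      ∀ j1 j2 j3 : Fin d, j1 < j2 → j2 < j3 →
        (τ.symm (τ' j1) < τ.symm (τ' j2) ∧ τ.symm (τ' j2) < τ.symm (τ' j3)) ∨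
        (τ.symm (τ' j3) < τ.symm (τ' j2) ∧ τ.symm (τ' j2) < τ.symm (τ' j1)) := by
  constructor
  · rintro (rfl | rfl) j1 j2 j3 h12 h23
    · left; simp [h12, h23]
    · right
      simp only [Equiv.Perm.mul_apply, Equiv.symm_apply_apply, Fin.revPerm_apply]
      simp [Fin.rev_lt_rev, h12, h23]
  · intro H
    set σ : Equiv.Perm (Fin d) := τ'.trans τ.symm with hσ
    have hσapp : ∀ j, σ j = τ.symm (τ' j) := by intro j; simp [hσ]
    have H' : ∀ j1 j2 j3 : Fin d, j1 < j2 → j2 < j3 →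
        (σ j1 < σ j2 ∧ σ j2 < σ j3) ∨ (σ j3 < σ j2 ∧ σ j2 < σ j1) := by
      intro j1 j2 j3 h12 h23
      simpa [hσapp] using H j1 j2 j3 h12 h23
    have hτ' : τ' = τ * σ := by
      ext j
      simp [hσapp]
    set z : Fin d := ⟨0, by omega⟩ with hz
    set o : Fin d := ⟨1, by omega⟩ with ho
    have h0 : z < o := by simp [Fin.lt_def, hz, ho]
    have hzle : ∀ i : Fin d, z ≤ i := by intro i; simp [Fin.le_def, hz]
    rcases lt_or_gt_of_ne (σ.injective.ne (show z ≠ o by simp [hz, ho, Fin.ext_iff]))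
      with hzo | hzo
    · -- monotone case
      have hA : ∀ k, z < k → σ z < σ k := by
        intro k hk
        rcases eq_or_lt_of_le (show o ≤ k by
          simp only [Fin.le_def, ho]
          have := hk
          simp [Fin.lt_def, hz] at this
          omega) with h1 | h1
        · rw [← h1]; exact hzo
        · rcases H' z o k h0 h1 with ⟨a, b⟩ | ⟨a, b⟩
          · exact a.trans b
          · exact absurd hzo (not_lt.mpr b.le)
      have hmono : StrictMono σ := by
        intro i j hij
        rcases eq_or_lt_of_le (hzle i) with h1 | h1
        · rw [← h1]; exact hA j (h1.trans_lt hij)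
        · rcases H' z i j h1 hij with ⟨a, b⟩ | ⟨a, b⟩
          · exact b
          · exact absurd b (not_lt.mpr (hA i h1).le)
      left
      rw [hτ', perm_eq_one_of_strictMono σ hmono, mul_one]
    · -- antitone case
      have hA : ∀ k, z < k → σ k < σ z := by
        intro k hk
        rcases eq_or_lt_of_le (show o ≤ k by
          simp only [Fin.le_def, ho]
          have := hk
          simp [Fin.lt_def, hz] at this
          omega) with h1 | h1
        · rw [← h1]; exact hzo
        · rcases H' z o k h0 h1 with ⟨a, b⟩ | ⟨a, b⟩
          · exact absurd hzo (not_lt.mpr a.le)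
          · exact a.trans b
      have hanti : ∀ i j : Fin d, i < j → σ j < σ i := by
        intro i j hij
        rcases eq_or_lt_of_le (hzle i) with h1 | h1
        · rw [← h1]; exact hA j (h1.trans_lt hij)
        · rcases H' z i j h1 hij with ⟨a, b⟩ | ⟨a, b⟩
          · exact absurd a (not_lt.mpr (hA i h1).le)
          · exact a
      have hrev : StrictMono (σ * Fin.revPerm : Equiv.Perm (Fin d)) := by
        intro a b hab
        have : b.rev < a.rev := Fin.rev_lt_rev.mpr hab
        simpa using hanti _ _ this
      right
      have hone := perm_eq_one_of_strictMono _ hrev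
      rw [hτ']
      have hrr : (Fin.revPerm * Fin.revPerm : Equiv.Perm (Fin d)) = 1 := by
        ext j; simp
      calc τ * σ = τ * ((σ * Fin.revPerm) * Fin.revPerm) := by
            rw [mul_assoc, hrr, mul_one]
        _ = τ * Fin.revPerm := by rw [hone, one_mul]
end

section
/- Let $d \ge 4$ and $\tau \in S_d$. Suppose for two permutations $\tau', \tau'' \in S_d$ that for all $1 \le j_1 < j_2 < j_3 < j_4 \le d$ both $(\tau'(j_1), \tau'(j_2), \tau'(j_3), \tau'(j_4))$ and $(\tau''(j_1), \tau''(j_2), \tau''(j_3), \tau''(j_4))$ are of the correct cyclic order with respect to $\tau$. Then $\tau'' = \tau' \circ \alpha^k \circ \beta^\ell$ for some $0 \le k < d$ and $\ell \in \{0,1\}$, where $\alpha(j) = j+1 \pmod d$ and $\beta(j) = d+1-j$. -/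
open Function Set Fin.CommRing

def CyclicallyMonotone {α : Type*} [Preorder α] (v : Fin 4 → α) : Prop :=
  ∃ s : Fin 4, StrictMono (fun a => v (s + a)) ∨ StrictAnti (fun a => v (s + a))

lemma correctOrder4_iff_cyclicallyMonotone {d : ℕ} (τ : Equiv.Perm (Fin d))
    (v : Fin 4 → Fin d) :
    correctOrder4 τ v ↔ CyclicallyMonotone (τ.symm ∘ v) :=
  Iff.rfl

lemma Fin.strictMono_four {α : Type*} [Preorder α] {f : Fin 4 → α} :
    StrictMono f ↔ f 0 < f 1 ∧ f 1 < f 2 ∧ f 2 < f 3 := by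
  simp [Fin.strictMono_iff_lt_succ, Fin.forall_fin_succ]

lemma Fin.strictAnti_four {α : Type*} [Preorder α] {f : Fin 4 → α} :
    StrictAnti f ↔ f 1 < f 0 ∧ f 2 < f 1 ∧ f 3 < f 2 := by
  simp [Fin.strictAnti_iff_succ_lt, Fin.forall_fin_succ]

lemma CyclicallyMonotone.lt_lt_or_lt_lt_of_head_lt {α : Type*} [Preorder α] {v : Fin 4 → α}
    (h : CyclicallyMonotone v) (h1 : v 0 < v 1) (h3 : v 0 < v 3) :
    (v 1 < v 2 ∧ v 2 < v 3) ∨ (v 2 < v 1 ∧ v 3 < v 2) := by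
  obtain ⟨s, hs | hs⟩ := h
  · rw [Fin.strictMono_four] at hs
    fin_cases s <;> simp_all [lt_asymm]
  · rw [Fin.strictAnti_four] at hs
    fin_cases s <;> simp_all [lt_asymm]

variable {n : ℕ}

lemma Fin.val_add_one_eq_of_lt {x y : Fin (n + 1)} (h : x < y) : (x + 1).val = x.val + 1 :=
  Fin.val_add_one_of_lt (lt_of_lt_of_le h (Fin.le_last _))

lemma exists_strictMono_rotate_add_one {w : Fin 4 → Fin (n + 1)} (h : StrictMono w) :
    ∃ t, StrictMono fun a => w (t + a) + 1 := by
  obtain ⟨h01, h12, h23⟩ := Fin.strictMono_four.1 h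
  by_cases hlast : w 3 = Fin.last n
  · refine ⟨3, Fin.strictMono_four.2 ?_⟩
    simp only [Fin.reduceAdd, add_zero, hlast, Fin.last_add_one, Fin.lt_def, Fin.val_zero,
      Fin.val_add_one_eq_of_lt h01, Fin.val_add_one_eq_of_lt h12,
      Fin.val_add_one_eq_of_lt h23]
    rw [Fin.lt_def] at h01 h12
    omega
  · have h3 : w 3 < Fin.last n := lt_of_le_of_ne (Fin.le_last _) hlast
    refine ⟨0, Fin.strictMono_four.2 ?_⟩
    simp only [zero_add, Fin.lt_def, Fin.val_add_one_eq_of_lt h01,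
      Fin.val_add_one_eq_of_lt h12, Fin.val_add_one_eq_of_lt h23,
      Fin.val_add_one_eq_of_lt h3]
    rw [Fin.lt_def] at h01 h12 h23
    omega

lemma exists_strictAnti_rotate_add_one {w : Fin 4 → Fin (n + 1)} (h : StrictAnti w) :
    ∃ t, StrictAnti fun a => w (t + a) + 1 := by
  obtain ⟨h10, h21, h32⟩ := Fin.strictAnti_four.1 h
  by_cases hlast : w 0 = Fin.last n
  · refine ⟨1, Fin.strictAnti_four.2 ?_⟩
    simp only [Fin.reduceAdd, add_zero, hlast, Fin.last_add_one, Fin.lt_def, Fin.val_zero,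
      Fin.val_add_one_eq_of_lt h10, Fin.val_add_one_eq_of_lt h21,
      Fin.val_add_one_eq_of_lt h32]
    rw [Fin.lt_def] at h21 h32
    omega
  · have h0 : w 0 < Fin.last n := lt_of_le_of_ne (Fin.le_last _) hlast
    refine ⟨0, Fin.strictAnti_four.2 ?_⟩
    simp only [zero_add, Fin.lt_def, Fin.val_add_one_eq_of_lt h10,
      Fin.val_add_one_eq_of_lt h21, Fin.val_add_one_eq_of_lt h32,
      Fin.val_add_one_eq_of_lt h0]
    rw [Fin.lt_def] at h10 h21 h32
    omega

lemma CyclicallyMonotone.add_one {v : Fin 4 → Fin (n + 1)} (h : CyclicallyMonotone v) :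
    CyclicallyMonotone fun i => v i + 1 := by
  obtain ⟨s, hs | hs⟩ := h
  · obtain ⟨t, ht⟩ := exists_strictMono_rotate_add_one hs
    exact ⟨s + t, Or.inl (by simpa only [add_assoc] using ht)⟩
  · obtain ⟨t, ht⟩ := exists_strictAnti_rotate_add_one hs
    exact ⟨s + t, Or.inr (by simpa only [add_assoc] using ht)⟩

lemma CyclicallyMonotone.add {v : Fin 4 → Fin (n + 1)} (h : CyclicallyMonotone v)
    (c : Fin (n + 1)) :
    CyclicallyMonotone fun i => v i + c := by
  have key : ∀ k : ℕ, CyclicallyMonotone fun i => v i + k := by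
    intro k
    induction k with
    | zero => simpa using h
    | succ k ih => simpa only [Nat.cast_succ, add_assoc] using ih.add_one
  simpa using key c.val

lemma eq_id_of_monotoneOn_Ioi_bot {α : Type*} [LinearOrder α] [OrderBot α] [Finite α]
    {f : α → α} (hf : Injective f) (hbot : f ⊥ = ⊥) (hmono : MonotoneOn f (Ioi ⊥)) : f = id := by
  refine StrictMono.eq_id (Monotone.strictMono_of_injective (fun a b hab => ?_) hf)
  rcases eq_bot_or_bot_lt a with rfl | ha
  · rw [hbot]
    exact bot_le
  · exact hmono ha (lt_of_lt_of_le ha hab) hab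

lemma Fin.strictAntiOn_neg : StrictAntiOn (fun x : Fin (n + 1) => -x) (Ioi 0) := by
  intro a ha b hb hab
  simp only [mem_Ioi] at ha hb
  simp only [Fin.lt_def, Fin.val_neg, ha.ne', hb.ne', if_false] at hab ⊢
  omega

def IsDihedral (f : Fin (n + 1) → Fin (n + 1)) : Prop :=
  ∃ c ε : Fin (n + 1), (ε = 1 ∨ ε = -1) ∧ ∀ j, f j = c + ε * j

lemma IsDihedral.of_comp {f g : Fin (n + 1) → Fin (n + 1)} (hg : IsDihedral g)
    (hgf : IsDihedral (g ∘ f)) : IsDihedral f := by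
  obtain ⟨c, ε, hε, hg⟩ := hg
  obtain ⟨c', ε', hε', hgf⟩ := hgf
  have hεε : ε * ε = 1 := by rcases hε with rfl | rfl <;> ring
  refine ⟨ε * (c' - c), ε * ε', ?_, fun j => ?_⟩
  · rcases hε with rfl | rfl <;> rcases hε' with rfl | rfl <;> simp
  · have := (hg (f j)).symm.trans (hgf j)
    linear_combination ε * this - f j * hεε

lemma finRotate_pow_apply (k : ℕ) (j : Fin (n + 1)) : (finRotate (n + 1) ^ k) j = j + k := by
  induction k with
  | zero => simp
  | succ k ih => rw [pow_succ', Equiv.Perm.mul_apply, finRotate_apply, ih]; push_cast; ring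

lemma Fin.rev_eq_neg_one_sub (x : Fin (n + 1)) : x.rev = -1 - x := by
  rw [← Fin.last_sub, eq_neg_of_add_eq_zero_left (Fin.last_add_one n)]

lemma IsDihedral.exists_eq_finRotate_pow_mul_revPerm_pow {π : Equiv.Perm (Fin (n + 1))}
    (h : IsDihedral π) : ∃ k < n + 1, ∃ ℓ < 2, π = finRotate (n + 1) ^ k * Fin.revPerm ^ ℓ := by
  obtain ⟨c, ε, rfl | rfl, hπ⟩ := h
  · refine ⟨c.val, c.isLt, 0, two_pos, Equiv.ext fun j => ?_⟩
    simp [hπ, finRotate_pow_apply, add_comm]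
  · refine ⟨(c + 1).val, (c + 1).isLt, 1, one_lt_two, Equiv.ext fun j => ?_⟩
    simp only [hπ, pow_one, Equiv.Perm.mul_apply, Fin.revPerm_apply, finRotate_pow_apply,
      Fin.cast_val_eq_self, Fin.rev_eq_neg_one_sub]
    ring

theorem isDihedral_of_cyclicallyMonotone {σ : Fin (n + 1) → Fin (n + 1)} (hσ : Injective σ)
    (h : ∀ p q r, 0 < p → p < q → q < r → CyclicallyMonotone (σ ∘ ![0, p, q, r])) :
    IsDihedral σ := by
  set ρ : Fin (n + 1) → Fin (n + 1) := fun j => σ j + -σ 0 with hρ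
  have hρ0 : ρ 0 = 0 := add_neg_cancel _
  have hρinj : Injective ρ := (add_left_injective _).comp hσ
  have hρpos : MapsTo ρ (Ioi 0) (Ioi 0) := fun j hj =>
    Fin.pos_of_ne_zero (hρ0 ▸ hρinj.ne hj.ne')
  have htriple : ∀ p q r, 0 < p → p < q → q < r →
      (ρ p < ρ q ∧ ρ q < ρ r) ∨ (ρ q < ρ p ∧ ρ r < ρ q) := by
    intro p q r hp hpq hqr
    refine ((h p q r hp hpq hqr).add (-σ 0)).lt_lt_or_lt_lt_of_head_lt ?_ ?_
    · show ρ 0 < ρ p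
      rw [hρ0]
      exact hρpos hp
    · show ρ 0 < ρ r
      rw [hρ0]
      exact hρpos (hp.trans (hpq.trans hqr))
  have hmono : MonotoneOn ρ (Ioi 0) ∨ AntitoneOn ρ (Ioi 0) := by
    by_contra! hne
    obtain ⟨p, hp, q, -, r, -, hpq, hqr, hbad⟩ :=
      Set.not_monotoneOn_not_antitoneOn_iff_exists_lt_lt.1 hne
    rcases htriple p q r hp hpq hqr with ⟨h1, h2⟩ | ⟨h1, h2⟩ <;>
      rcases hbad with ⟨h3, h4⟩ | ⟨h3, h4⟩ <;> order
  rcases hmono with hmono | hanti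
  · have hid := eq_id_of_monotoneOn_Ioi_bot hρinj (by rwa [bot_eq_zero]) (by rwa [bot_eq_zero])
    refine ⟨σ 0, 1, Or.inl rfl, fun j => ?_⟩
    have := congrFun hid j
    simp only [hρ, id] at this
    linear_combination this
  · have hneg : MonotoneOn (fun j => -ρ j) (Ioi 0) :=
      Fin.strictAntiOn_neg.antitoneOn.comp hanti hρpos
    have hid := eq_id_of_monotoneOn_Ioi_bot (neg_injective.comp hρinj)
      (by simpa [bot_eq_zero]) (by rwa [bot_eq_zero])
    refine ⟨σ 0, -1, Or.inr rfl, fun j => ?_⟩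
    have := congrFun hid j
    simp only [hρ, id, comp_apply] at this
    linear_combination -this

lemma isDihedral_symm_comp_of_correctOrder4 {τ π : Equiv.Perm (Fin (n + 1))}
    (h : ∀ j1 j2 j3 j4 : Fin (n + 1), j1 < j2 → j2 < j3 → j3 < j4 →
      correctOrder4 τ ![π j1, π j2, π j3, π j4]) :
    IsDihedral (τ.symm ∘ π) := by
  refine isDihedral_of_cyclicallyMonotone (τ.symm.injective.comp π.injective) ?_
  intro p q r hp hpq hqr
  have hvec : ![π 0, π p, π q, π r] = π ∘ ![0, p, q, r] := by
    ext i
    fin_cases i <;> rfl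
  simpa only [correctOrder4_iff_cyclicallyMonotone, hvec, comp_assoc] using
    h 0 p q r hp hpq hqr

/-- If two permutations `τ'` and `τ''` are both consistent with `τ` on all quadruples
(every increasing quadruple of positions is mapped to a quadruple of the correct cyclic
order with respect to `τ`), then `τ'' = τ' ∘ αᵏ ∘ βˡ` for some `0 ≤ k < d`, `ℓ ∈ {0,1}`,
where `α` is the rotation and `β` the reflection. -/
theorem quadruple_order_determines_up_to_dihedral (d : ℕ) (hd : 4 ≤ d)
    (τ τ' τ'' : Equiv.Perm (Fin d))
    (h1 : ∀ j1 j2 j3 j4 : Fin d, j1 < j2 → j2 < j3 → j3 < j4 →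
      correctOrder4 τ ![τ' j1, τ' j2, τ' j3, τ' j4])
    (h2 : ∀ j1 j2 j3 j4 : Fin d, j1 < j2 → j2 < j3 → j3 < j4 →
      correctOrder4 τ ![τ'' j1, τ'' j2, τ'' j3, τ'' j4]) :
    ∃ k < d, ∃ ℓ < 2,
      τ'' = τ' * (finRotate d) ^ k * (Fin.revPerm : Equiv.Perm (Fin d)) ^ ℓ := by
  obtain ⟨n, rfl⟩ : ∃ n, d = n + 1 := ⟨d - 1, by omega⟩
  have hπ : IsDihedral ⇑(τ'⁻¹ * τ'') := by
    refine (isDihedral_symm_comp_of_correctOrder4 h1).of_comp ?_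
    convert isDihedral_symm_comp_of_correctOrder4 h2 using 1
    funext j
    simp
  obtain ⟨k, hk, ℓ, hℓ, hkℓ⟩ := hπ.exists_eq_finRotate_pow_mul_revPerm_pow
  exact ⟨k, hk, ℓ, hℓ, by rw [mul_assoc, ← hkℓ, mul_inv_cancel_left]⟩
end
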